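/- Let N ≥ 2 and let K be the Metropolis–Hastings kernel on simple graphs on Fin N built from a weight w (arising from edge probabilities p with 0 < p e < 1) and selection probability δ = 2/(N(N−1)). Then the chain is aperiodic in the sense that there exists a connected simple graph G on Fin N (for example, any tree) with K(G,G) > 0: from a tree, every proposed edge removal destroys connectivity and is rejected, so the chain remains in its current state with positive probability. -/

import Mathlib

open Classical

noncomputable section

/-- Weight of a simple graph `G` on `Fin N`: product over all non-diagonal unordered
pairs `e` of `p e` if `e` is an edge of `G`, and `1 - p e` otherwise. -/
def graphWeight {N : ℕ} (p : Sym2 (Fin N) → ℝ) (G : SimpleGraph (Fin N)) : ℝ :=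
  ∏ e ∈ Finset.univ.filter (fun e : Sym2 (Fin N) => ¬ e.IsDiag),
    (if e ∈ G.edgeSet then p e else 1 - p e)

/-- `G` and `H` have edge sets differing in exactly one unordered pair. -/
def differByOneEdge {N : ℕ} (G H : SimpleGraph (Fin N)) : Prop :=
  ∃ e : Sym2 (Fin N), symmDiff G.edgeSet H.edgeSet = {e}

/-- Off-diagonal part of the Metropolis–Hastings kernel: for `G ≠ H` differing in exactly
one pair, it is `δ * min 1 (w H / w G)` if `H` is connected and `0` otherwise; it is `0`
for all other pairs. -/
def mhOff {N : ℕ} (p : Sym2 (Fin N) → ℝ) (δ : ℝ) (G H : SimpleGraph (Fin N)) : ℝ :=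
  if differByOneEdge G H ∧ H.Connected then δ * min 1 (graphWeight p H / graphWeight p G)
  else 0

/-- The Metropolis–Hastings kernel `K`. -/
def mhKernel {N : ℕ} (p : Sym2 (Fin N) → ℝ) (δ : ℝ) (G H : SimpleGraph (Fin N)) : ℝ :=
  if G = H then 1 - ∑ H' ∈ Finset.univ.filter (fun H' => H' ≠ G), mhOff p δ G H'
  else mhOff p δ G H

/-- Target distribution: `π G = w G / Z` for connected `G` and `0` otherwise, where
`Z` is the sum of weights of connected graphs. -/
def mhTarget {N : ℕ} (p : Sym2 (Fin N) → ℝ) (G : SimpleGraph (Fin N)) : ℝ :=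
  if G.Connected then
    graphWeight p G /
      ∑ G' ∈ Finset.univ.filter (fun G' : SimpleGraph (Fin N) => G'.Connected),
        graphWeight p G'
  else 0


lemma graphWeight_pos {N : ℕ} (p : Sym2 (Fin N) → ℝ)
    (hp : ∀ e : Sym2 (Fin N), ¬ e.IsDiag → 0 < p e ∧ p e < 1) (G : SimpleGraph (Fin N)) :
    0 < graphWeight p G := by
  apply Finset.prod_pos
  intro e he
  rw [Finset.mem_filter] at he
  rcases hp e he.2 with ⟨h1, h2⟩
  split <;> linarith

lemma mhOff_le_delta {N : ℕ} (p : Sym2 (Fin N) → ℝ) {δ : ℝ} (hδ : 0 ≤ δ)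
    (G H : SimpleGraph (Fin N)) : mhOff p δ G H ≤ δ := by
  rw [mhOff]
  split
  · exact mul_le_of_le_one_right hδ (min_le_left _ _)
  · exact hδ

/-- Aperiodicity of the Metropolis–Hastings chain: there exists a connected simple
graph `G` on `Fin N` with `K(G,G) > 0` (e.g. a tree, where every proposed edge removal
destroys connectivity and is rejected). -/
theorem mh_aperiodic {N : ℕ} (hN : 2 ≤ N) (p : Sym2 (Fin N) → ℝ)
    (hp : ∀ e : Sym2 (Fin N), ¬ e.IsDiag → 0 < p e ∧ p e < 1) :
    ∃ G : SimpleGraph (Fin N), G.Connected ∧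
      0 < mhKernel p (2 / (N * (N - 1))) G G := by
  classical
  set δ : ℝ := 2 / (N * (N - 1)) with hδdef
  have hN2 : (2:ℝ) ≤ (N:ℝ) := by exact_mod_cast hN
  have hNN : (0:ℝ) < (N:ℝ) * ((N:ℝ) - 1) := by nlinarith
  have hδpos : 0 < δ := div_pos two_pos hNN
  -- the star graph centered at vertex 0
  let v0 : Fin N := ⟨0, by omega⟩
  let v1 : Fin N := ⟨1, by omega⟩
  have hv01 : v0 ≠ v1 := by simp [v0, v1, Fin.ext_iff]
  let G : SimpleGraph (Fin N) :=
    { Adj := fun a b => a ≠ b ∧ (a = v0 ∨ b = v0),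
      symm := ⟨fun a b h => ⟨h.1.symm, h.2.symm⟩⟩,
      loopless := ⟨fun a h => h.1 rfl⟩ }
  have hadj0 : ∀ b : Fin N, b ≠ v0 → G.Adj v0 b :=
    fun b hb => ⟨fun h => hb h.symm, Or.inl rfl⟩
  have hGconn : G.Connected := by
    rw [SimpleGraph.connected_iff_exists_forall_reachable]
    refine ⟨v0, fun b => ?_⟩
    by_cases h : b = v0
    · rw [h]
    · exact (hadj0 b h).reachable
  refine ⟨G, hGconn, ?_⟩
  rw [mhKernel, if_pos rfl]
  -- the special edge
  have he01G : s(v0, v1) ∈ G.edgeSet := ⟨hv01, Or.inl rfl⟩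
  have he01nd : ¬ (s(v0, v1) : Sym2 (Fin N)).IsDiag := by
    rw [Sym2.mk_isDiag_iff]; exact hv01
  set A := Finset.univ.filter (fun H' : SimpleGraph (Fin N) => H' ≠ G) with hA
  set S := A.filter (fun H' => mhOff p δ G H' ≠ 0) with hS
  have hcond : ∀ H' ∈ S, differByOneEdge G H' ∧ H'.Connected := by
    intro H' hH'
    rw [hS, Finset.mem_filter] at hH'
    by_contra h
    exact hH'.2 (by rw [mhOff, if_neg h])
  set φ : SimpleGraph (Fin N) → Sym2 (Fin N) :=
    fun H' => if h : differByOneEdge G H' then h.choose else s(v0, v1) with hφ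
  have hφspec : ∀ H' ∈ S, symmDiff G.edgeSet H'.edgeSet = {φ H'} := by
    intro H' hH'
    have h := (hcond H' hH').1
    simp only [hφ, dif_pos h]
    exact h.choose_spec
  set T := (Finset.univ.filter fun e : Sym2 (Fin N) => ¬ e.IsDiag).erase s(v0, v1) with hT
  have hmaps : ∀ H' ∈ S, φ H' ∈ T := by
    intro H' hH'
    obtain ⟨hd, hc⟩ := hcond H' hH'
    have hsd := hφspec H' hH'
    have hmem : φ H' ∈ symmDiff G.edgeSet H'.edgeSet := by
      rw [hsd]; exact Set.mem_singleton _
    rw [Set.mem_symmDiff] at hmem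
    have hnd : ¬ (φ H').IsDiag := by
      rcases hmem with h | h
      · exact G.not_isDiag_of_mem_edgeSet h.1
      · exact H'.not_isDiag_of_mem_edgeSet h.1
    have hne : φ H' ≠ s(v0, v1) := by
      intro he
      rw [he] at hsd
      -- s(v0,v1) is removed in H'
      have h01 : s(v0, v1) ∉ H'.edgeSet := by
        have : s(v0, v1) ∈ symmDiff G.edgeSet H'.edgeSet := by
          rw [hsd]; exact Set.mem_singleton _
        rw [Set.mem_symmDiff] at this
        rcases this with h | h
        · exact h.2
        · exact absurd he01G h.2
      -- vertex v1 is isolated in H'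
      have hiso : ∀ b : Fin N, ¬ H'.Adj v1 b := by
        intro b hb
        have hbe : s(v1, b) ∈ H'.edgeSet := hb
        by_cases hc2 : (s(v1, b) : Sym2 (Fin N)) = s(v0, v1)
        · rw [hc2] at hbe; exact h01 hbe
        · have hnsd : s(v1, b) ∉ symmDiff G.edgeSet H'.edgeSet := by
            rw [hsd]; simpa using hc2
          rw [Set.mem_symmDiff] at hnsd
          push_neg at hnsd
          have hG : s(v1, b) ∈ G.edgeSet := hnsd.2 hbe
          have hGadj : G.Adj v1 b := hG
          rcases hGadj.2 with h | h
          · exact hv01 h.symm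
          · apply hc2
            rw [h, Sym2.eq_swap]
      obtain ⟨w⟩ := hc.preconnected v1 v0
      have hnn : ¬ w.Nil := SimpleGraph.Walk.not_nil_of_ne (fun h => hv01 h.symm)
      exact hiso _ (SimpleGraph.Walk.adj_snd hnn)
    rw [hT, Finset.mem_erase, Finset.mem_filter]
    exact ⟨hne, Finset.mem_univ _, hnd⟩
  have hinj : Set.InjOn φ S := by
    intro H₁ h₁ H₂ h₂ heq
    have e₁ := hφspec H₁ h₁
    have e₂ := hφspec H₂ h₂
    rw [heq, ← e₂] at e₁
    exact SimpleGraph.edgeSet_inj.mp (symmDiff_right_injective G.edgeSet e₁)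
  have hcardST : S.card ≤ T.card := Finset.card_le_card_of_injOn φ hmaps hinj
  -- cardinality of the set of non-diagonal pairs
  have hM : (Finset.univ.filter fun e : Sym2 (Fin N) => ¬ e.IsDiag).card = N.choose 2 := by
    rw [← Fintype.card_subtype]
    simpa using Sym2.card_subtype_not_diag (α := Fin N)
  have hMpos : 1 ≤ (Finset.univ.filter fun e : Sym2 (Fin N) => ¬ e.IsDiag).card :=
    Finset.card_pos.mpr ⟨s(v0, v1), Finset.mem_filter.mpr ⟨Finset.mem_univ _, he01nd⟩⟩
  have hcardT : T.card = N.choose 2 - 1 := by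
    have h := Finset.card_erase_of_mem (a := (s(v0, v1) : Sym2 (Fin N)))
      (s := Finset.univ.filter fun e : Sym2 (Fin N) => ¬ e.IsDiag)
      (Finset.mem_filter.mpr ⟨Finset.mem_univ _, he01nd⟩)
    rw [hM] at h
    exact h
  have hchoose : ((N.choose 2 : ℕ) : ℝ) * δ = 1 := by
    rw [Nat.cast_choose_two, hδdef]
    field_simp
    exact div_self (by linarith)
  -- now bound the sum
  have hsum : ∑ H' ∈ A, mhOff p δ G H' ≤ 1 - δ := by
    have h1 : ∑ H' ∈ A, mhOff p δ G H' = ∑ H' ∈ S, mhOff p δ G H' :=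
      (Finset.sum_filter_ne_zero A).symm
    have h2 : ∑ H' ∈ S, mhOff p δ G H' ≤ S.card • δ :=
      Finset.sum_le_card_nsmul S _ δ (fun H' _ => mhOff_le_delta p hδpos.le G H')
    have h3 : (S.card : ℝ) * δ ≤ (T.card : ℝ) * δ :=
      mul_le_mul_of_nonneg_right (by exact_mod_cast hcardST) hδpos.le
    have h4 : (T.card : ℝ) = ((N.choose 2 : ℕ) : ℝ) - 1 := by
      rw [hcardT, Nat.cast_sub (by rw [← hM]; exact hMpos)]
      simp
    have h5 : (T.card : ℝ) * δ = 1 - δ := by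
      rw [h4, sub_mul, hchoose, one_mul]
    rw [h1]
    calc ∑ H' ∈ S, mhOff p δ G H' ≤ S.card • δ := h2
      _ = (S.card : ℝ) * δ := by rw [nsmul_eq_mul]
      _ ≤ (T.card : ℝ) * δ := h3
      _ = 1 - δ := h5
  linarith


end
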